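/- There exist universal constants κ and c such that the following holds for any α ∈ (0,1). On the event B_{1−α}, which has probability at least 1 − α, and for any change-point vector τ (possibly data-dependent): (a) the pruned vector P(τ) satisfies (NoSp); (b) any (κ, ζ²_{1−α})-high-energy change-point τ*_k that is reasonably well localized by τ also satisfies d_{H,1}( P(τ), τ*_k ) ≤ max( 2 d_{H,1}(τ, τ*_k), c ( log(n Δ_k²) + ζ²_{1−α} ) / Δ_k² ). -/

import Mathlib

open MeasureTheory ProbabilityTheory Finset Real

/-- independent centered 1-sub-Gaussian noise hypotheses. -/
def IsStdSubGaussian {Ω : Type} [MeasurableSpace Ω] (P : Measure Ω) (ε : ℕ → Ω → ℝ) : Prop :=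
  (∀ i, Measurable (ε i)) ∧
  iIndepFun ε P ∧
  (∀ i, ∫ ω, ε i ω ∂P = 0) ∧
  (∀ i (t : ℝ), Integrable (fun ω => Real.exp (t * ε i ω)) P) ∧
  (∀ i (t : ℝ), ∫ ω, Real.exp (t * ε i ω) ∂P ≤ Real.exp (t ^ 2 / 2))

/-- Mean of `Y` over the integer interval `[a, b)`. -/
noncomputable def segMean (Y : ℕ → ℝ) (a b : ℕ) : ℝ :=
  (∑ i ∈ Finset.Ico a b, Y i) / ((b : ℝ) - (a : ℝ))

/-- CUSUM statistic of `Y` at the triad `(t₁, t₂, t₃)`. -/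
noncomputable def cusum (Y : ℕ → ℝ) (t₁ t₂ t₃ : ℕ) : ℝ :=
  (segMean Y t₂ t₃ - segMean Y t₁ t₂) *
    Real.sqrt ((((t₂ : ℝ) - t₁) * ((t₃ : ℝ) - t₂)) / ((t₃ : ℝ) - t₁))

/-- Largest boundary point (element of `S ∪ {1}`) which is `≤ i`. -/
def prevPt (S : Finset ℕ) (i : ℕ) : ℕ :=
  if h : ((insert 1 S).filter (fun s => s ≤ i)).Nonempty
  then ((insert 1 S).filter (fun s => s ≤ i)).max' h else 1

/-- Smallest boundary point (element of `S ∪ {n+1}`) which is `> i`. -/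
def nextPt (n : ℕ) (S : Finset ℕ) (i : ℕ) : ℕ :=
  if h : ((insert (n + 1) S).filter (fun s => i < s)).Nonempty
  then ((insert (n + 1) S).filter (fun s => i < s)).min' h else n + 1

/-- Orthogonal projection of `Y` onto vectors that are constant on each segment determined by
the change-point set `S ⊆ {2,…,n}` (the value at `i` is the mean of `Y` on the segment
containing `i`). -/
noncomputable def projCP (n : ℕ) (S : Finset ℕ) (Y : ℕ → ℝ) (i : ℕ) : ℝ :=
  segMean Y (prevPt S i) (nextPt n S i)
open scoped ENNReal NNReal

/-- The multiscale penalty `pen₀(τ, q)`. -/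
noncomputable def pen0 (n : ℕ) (q : ℝ) (S : Finset ℕ) : ℝ :=
  q * S.card + 2 * ∑ s ∈ insert 1 S, Real.log ((n : ℝ) / ((nextPt n S s : ℝ) - (s : ℝ)))

/-- The multiscale penalized least-squares criterion
`Cr₀(Y, τ) = ‖Y - Π_τ Y‖² + L pen₀(τ, q)`. -/
noncomputable def Cr0 (n : ℕ) (L q : ℝ) (Y : ℕ → ℝ) (S : Finset ℕ) : ℝ :=
  (∑ i ∈ Finset.Icc 1 n, (Y i - projCP n S Y i) ^ 2) + L * pen0 n q S

/-- The piecewise constant signal with change-points `τ 1 < … < τ K` and levels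
`μ 1, …, μ (K+1)`:  `θ i = μ k` for `τ (k-1) ≤ i < τ k`. -/
noncomputable def cpSignal (K : ℕ) (τ : ℕ → ℕ) (μ : ℕ → ℝ) : ℕ → ℝ :=
  fun i => μ (((Finset.Icc 1 K).filter (fun k => τ k ≤ i)).card + 1)

/-- `ψ_q²` evaluated at the triad `(a, b, c)`:
`2 log (n (c - a) / ((c - b)(b - a))) + q`. -/
noncomputable def psiSq (n : ℕ) (q : ℝ) (a b c : ℕ) : ℝ :=
  2 * Real.log ((n : ℝ) * ((c : ℝ) - (a : ℝ)) / (((c : ℝ) - (b : ℝ)) * ((b : ℝ) - (a : ℝ)))) + q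

/-- `d_{H,1}(S, t) = min_{s ∈ S} |s - t|` (with value `∞` for `S = ∅`). -/
noncomputable def dH1 (S : Finset ℕ) (t : ℕ) : ℝ≥0∞ :=
  ⨅ s ∈ S, ((((s : ℤ) - (t : ℤ)).natAbs : ℕ) : ℝ≥0∞)

/-- Property (NoSp): no spurious change-point is detected by `S`. -/
def NoSp (n K : ℕ) (τ : ℕ → ℕ) (S : Finset ℕ) : Prop :=
  (∀ k, 2 ≤ k → k ≤ K - 1 →
    (S.filter (fun s : ℕ =>
      ((τ (k - 1) : ℝ) + (τ k : ℝ)) / 2 < (s : ℝ) ∧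
      (s : ℝ) ≤ ((τ k : ℝ) + (τ (k + 1) : ℝ)) / 2)).card ≤ 1) ∧
  (S.filter (fun s : ℕ => 2 ≤ s ∧ (s : ℝ) ≤ ((τ 1 : ℝ) + (τ 2 : ℝ)) / 2)).card ≤ 1 ∧
  (S.filter (fun s : ℕ =>
      ((τ (K - 1) : ℝ) + (τ K : ℝ)) / 2 < (s : ℝ) ∧ s ≤ n)).card ≤ 1

/-- The change-point data: `τ 0 = 1 < τ 1 < … < τ K < τ (K+1) = n+1` and consecutive levels
`μ k ≠ μ (k+1)`. -/
def IsCPData (n K : ℕ) (τ : ℕ → ℕ) (μ : ℕ → ℝ) : Prop :=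
  τ 0 = 1 ∧ τ (K + 1) = n + 1 ∧ (∀ k, k ≤ K → τ k < τ (k + 1)) ∧
  (∀ k, 1 ≤ k → k ≤ K → μ k ≠ μ (k + 1))

/-- The threshold `sqrt(2 log(n (t₃-t₁)/((t₃-t₂)(t₂-t₁))))`. -/
noncomputable def thrB (n t₁ t₂ t₃ : ℕ) : ℝ :=
  Real.sqrt (2 * Real.log ((n : ℝ) * ((t₃ : ℝ) - t₁) / (((t₃ : ℝ) - t₂) * ((t₂ : ℝ) - t₁))))

/-- The event `ℬ_{1-α}` on which `|N(t)| ≤ thr(t) + ζ` for every triad `t`. -/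
def eventB (n : ℕ) (ζ : ℝ) {Ω : Type} (ε : ℕ → Ω → ℝ) : Set Ω :=
  {ω | ∀ t₁ t₂ t₃ : ℕ, 1 ≤ t₁ → t₁ < t₂ → t₂ < t₃ → t₃ ≤ n + 1 →
    |cusum (fun i => ε i ω) t₁ t₂ t₃| ≤ thrB n t₁ t₂ t₃ + ζ}

/-- Left endpoint `(τ - r) ∨ 1` of the symmetric window of radius `r` around `τ`. -/
def tlo (τ r : ℕ) : ℕ := max (τ - r) 1

/-- Right endpoint `(τ + r) ∧ (n+1)` of the symmetric window of radius `r` around `τ`. -/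
def thi (n τ r : ℕ) : ℕ := min (τ + r) (n + 1)

/-- The smallest radius `r ≥ 1` at which the CUSUM centered at `τ` exceeds the threshold
(`⊤` if there is none). -/
noncomputable def rhat (n : ℕ) (ζ : ℝ) (Y : ℕ → ℝ) (τ : ℕ) : ℕ∞ :=
  ⨅ r ∈ {r : ℕ | 1 ≤ r ∧
      thrB n (tlo τ r) τ (thi n τ r) + ζ < |cusum Y (tlo τ r) τ (thi n τ r)|}, (r : ℕ∞)

/-- The confidence interval `I_τ = [t₁^{(τ, r̂_τ)} + 1, t₃^{(τ, r̂_τ)} - 1]`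
(empty if `r̂_τ = ∞`). -/
noncomputable def Itau (n : ℕ) (ζ : ℝ) (Y : ℕ → ℝ) (τ : ℕ) : Finset ℕ :=
  if rhat n ζ Y τ = ⊤ then ∅
  else Finset.Icc (tlo τ (rhat n ζ Y τ).toNat + 1) (thi n τ (rhat n ζ Y τ).toNat - 1)

/-- The pruning procedure applied to a list of candidate change-points, ordered by
nonincreasing values of `r̂`:  a point is removed if its radius is infinite or if its
confidence interval intersects the confidence interval of a later point; the last point
is always kept. -/
noncomputable def pruneList (rh : ℕ → ℕ∞) (I : ℕ → Finset ℕ) : List ℕ → Finset ℕ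
  | [] => ∅
  | a :: rest =>
    if rest = [] then {a}
    else if rh a = ⊤ ∨ ∃ b ∈ rest, ((I a) ∩ (I b)).Nonempty then pruneList rh I rest
    else insert a (pruneList rh I rest)

/-!
On the event `ℬ_{1-α}` the noise CUSUM of every triad stays below its threshold, so a window
around `s` can only be significant if the signal is not constant on it: it contains a true
change-point at distance `< r̂_s` from `s`. Hence the change-point of the Voronoi cell of `s`
lies in `I_s`. Kept points have pairwise disjoint intervals, so each cell contains at most one
of them, which is (NoSp).

For (b), let `a` be the point of `τ` nearest to `τ*_k`, at distance `d`. The high-energy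
condition with `κ = 1000` makes the signal CUSUM of the symmetric window of radius
`r = max (2d + 1) (⌊200 (log (n Δ_k²) + ζ²) / Δ_k²⌋ + 1)` around `a` exceed twice the threshold,
so `r̂_a ≤ r`, while `4 (r - 1)` is below both spacings at `τ*_k`. If the pruning removes a point
`x` with `τ*_k ∈ I_x` and `r̂_x ≤ r` because of a later `y`, then `r̂_y ≤ r̂_x` and
`I_x ∩ I_y ≠ ∅` put the change-point found near `y` within `4 (r - 1)` of `τ*_k`, so it is
`τ*_k` and `τ*_k ∈ I_y`. Following these removals from `a` ends at a kept point within `r - 1`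
of `τ*_k`.
-/

lemma cusum_add (f g : ℕ → ℝ) (t₁ t₂ t₃ : ℕ) :
    cusum (fun i => f i + g i) t₁ t₂ t₃ = cusum f t₁ t₂ t₃ + cusum g t₁ t₂ t₃ := by
  simp only [cusum, segMean, Finset.sum_add_distrib]
  ring

lemma segMean_eq_of_forall_eq {Y : ℕ → ℝ} {a b : ℕ} {c : ℝ} (hab : a < b)
    (h : ∀ i ∈ Finset.Ico a b, Y i = c) : segMean Y a b = c := by
  have hba : (b : ℝ) - a ≠ 0 := sub_ne_zero.2 (by exact_mod_cast hab.ne')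
  rw [segMean, Finset.sum_congr rfl h, Finset.sum_const, Nat.card_Ico, nsmul_eq_mul,
    Nat.cast_sub hab.le]
  field_simp

lemma cusum_eq_zero_of_forall_eq {Y : ℕ → ℝ} {t₁ t₂ t₃ : ℕ} {c : ℝ} (h₁₂ : t₁ < t₂)
    (h₂₃ : t₂ < t₃) (h : ∀ i ∈ Finset.Ico t₁ t₃, Y i = c) : cusum Y t₁ t₂ t₃ = 0 := by
  have hsub {u v : ℕ} (hu : t₁ ≤ u) (hv : v ≤ t₃) : ∀ i ∈ Finset.Ico u v, Y i = c :=
    fun i hi => h i (by simp only [Finset.mem_Ico] at hi ⊢; omega)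
  rw [cusum, segMean_eq_of_forall_eq h₂₃ (hsub h₁₂.le le_rfl),
    segMean_eq_of_forall_eq h₁₂ (hsub le_rfl h₂₃.le), sub_self, zero_mul]

lemma cusum_symm {Y : ℕ → ℝ} {a r : ℕ} (hr : 0 < r) (hra : r ≤ a) :
    cusum Y (a - r) a (a + r) =
      ((∑ i ∈ Finset.Ico a (a + r), Y i) - ∑ i ∈ Finset.Ico (a - r) a, Y i) / r * √(r / 2) := by
  have hr' : (r : ℝ) ≠ 0 := by positivity
  simp only [cusum, segMean]
  push_cast [Nat.cast_sub hra]
  rw [show (a : ℝ) + r - a = r by ring, show (a : ℝ) - (a - r) = r by ring,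
    show (a : ℝ) + r - (a - r) = r + r by ring, show (r : ℝ) * r / (r + r) = r / 2 by
      field_simp; ring]
  ring

lemma thrB_symm {n a r : ℕ} (hr : 0 < r) (hra : r ≤ a) :
    thrB n (a - r) a (a + r) = √(2 * Real.log (2 * n / r)) := by
  have hr' : (r : ℝ) ≠ 0 := by positivity
  rw [thrB]
  push_cast [Nat.cast_sub hra]
  rw [show (a : ℝ) + r - (a - r) = 2 * r by ring, show (a : ℝ) + r - a = r by ring,
    show (a : ℝ) - (a - r) = r by ring, mul_left_comm, ← mul_assoc, mul_div_mul_right _ _ hr']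

section Signal

variable {n K : ℕ} {τ : ℕ → ℕ} {μ : ℕ → ℝ}

lemma tau_le_tau (hlt : ∀ k ≤ K, τ k < τ (k + 1)) {i j : ℕ} (hij : i ≤ j) (hj : j ≤ K + 1) :
    τ i ≤ τ j := by
  have hmono : StrictMonoOn τ (Set.Iic (K + 1)) := strictMonoOn_Iic_of_lt_succ fun m hm => by
    simpa [Order.succ_eq_add_one] using hlt m (by omega)
  exact (hmono.le_iff_le (Set.mem_Iic.2 (hij.trans hj)) (Set.mem_Iic.2 hj)).2 hij

lemma tau_mem_Icc (h0 : τ 0 = 1) (hK1 : τ (K + 1) = n + 1) (hlt : ∀ k ≤ K, τ k < τ (k + 1))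
    {k : ℕ} (hk1 : 1 ≤ k) (hkK : k ≤ K) : 2 ≤ τ k ∧ τ k ≤ n := by
  have h1 := tau_le_tau hlt hk1 (by omega)
  have h2 := tau_le_tau hlt hkK (by omega)
  have h3 : τ 0 < τ 1 := hlt 0 (by omega)
  have h4 := hlt K le_rfl
  omega

lemma eq_of_natAbs_tau_sub_le (hlt : ∀ k ≤ K, τ k < τ (k + 1)) {j k m : ℕ}
    (hjK : j ≤ K) (hkK : k ≤ K)
    (h : ((τ j : ℤ) - τ k).natAbs ≤ m) (hl : m + τ (k - 1) < τ k) (hr : m + τ k < τ (k + 1)) :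
    j = k := by
  rcases lt_trichotomy j k with hjk | rfl | hjk
  · have := tau_le_tau hlt (show j ≤ k - 1 by omega) (by omega)
    omega
  · rfl
  · have := tau_le_tau hlt (show k + 1 ≤ j by omega) (by omega)
    omega

lemma cpSignal_eq (hlt : ∀ k ≤ K, τ k < τ (k + 1)) {j i : ℕ} (hjK : j ≤ K) (h₁ : τ j ≤ i)
    (h₂ : i < τ (j + 1)) : cpSignal K τ μ i = μ (j + 1) := by
  have hset : (Finset.Icc 1 K).filter (fun k => τ k ≤ i) = Finset.Icc 1 j := by
    ext k
    simp only [Finset.mem_filter, Finset.mem_Icc]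
    constructor
    · rintro ⟨⟨hk1, hkK⟩, hki⟩
      refine ⟨hk1, not_lt.1 fun hjk => ?_⟩
      have := tau_le_tau hlt (show j + 1 ≤ k by omega) (by omega)
      omega
    · rintro ⟨hk1, hkj⟩
      exact ⟨⟨hk1, hkj.trans hjK⟩, (tau_le_tau hlt hkj (by omega)).trans h₁⟩
  rw [cpSignal, hset, Nat.card_Icc, Nat.add_sub_cancel]

lemma cpSignal_eq_of_forall_not_mem {t₁ t₃ : ℕ}
    (h : ∀ j, 1 ≤ j → j ≤ K → ¬(t₁ < τ j ∧ τ j < t₃)) :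
    ∀ i ∈ Finset.Ico t₁ t₃, cpSignal K τ μ i = cpSignal K τ μ t₁ := by
  intro i hi
  rw [Finset.mem_Ico] at hi
  have hset : (Finset.Icc 1 K).filter (fun k => τ k ≤ i) =
      (Finset.Icc 1 K).filter (fun k => τ k ≤ t₁) := Finset.filter_congr fun j hj => by
    rw [Finset.mem_Icc] at hj
    have := h j hj.1 hj.2
    constructor <;> intro <;> omega
  rw [cpSignal, cpSignal, hset]

lemma sum_cpSignal_Ico (hlt : ∀ k ≤ K, τ k < τ (k + 1)) {j u v : ℕ} (hjK : j ≤ K)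
    (hu : τ j ≤ u) (huv : u ≤ v) (hv : v ≤ τ (j + 1)) :
    ∑ i ∈ Finset.Ico u v, cpSignal K τ μ i = ((v : ℝ) - u) * μ (j + 1) := by
  rw [Finset.sum_congr rfl fun i hi => cpSignal_eq hlt hjK (hu.trans (Finset.mem_Ico.1 hi).1)
      ((Finset.mem_Ico.1 hi).2.trans_le hv), Finset.sum_const, Nat.card_Ico, nsmul_eq_mul,
    Nat.cast_sub huv]

lemma sum_sub_sum_cpSignal_symm (hlt : ∀ k ≤ K, τ k < τ (k + 1)) {k a r : ℕ} (hk1 : 1 ≤ k)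
    (hkK : k ≤ K) (hl : τ (k - 1) + r ≤ a) (hr : a + r ≤ τ (k + 1)) (hka : τ k ≤ a + r)
    (hak : a ≤ τ k + r) :
    (∑ i ∈ Finset.Ico a (a + r), cpSignal K τ μ i) - ∑ i ∈ Finset.Ico (a - r) a, cpSignal K τ μ i
      = ((r : ℝ) - |(a : ℝ) - τ k|) * (μ (k + 1) - μ k) := by
  have hk : k - 1 + 1 = k := by omega
  have left {u v : ℕ} (hu : τ (k - 1) ≤ u) (huv : u ≤ v) (hv : v ≤ τ k) :
      ∑ i ∈ Finset.Ico u v, cpSignal K τ μ i = ((v : ℝ) - u) * μ k := by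
    rw [sum_cpSignal_Ico hlt (by omega) hu huv (hk ▸ hv), hk]
  have right {u v : ℕ} (hu : τ k ≤ u) (huv : u ≤ v) (hv : v ≤ τ (k + 1)) :
      ∑ i ∈ Finset.Ico u v, cpSignal K τ μ i = ((v : ℝ) - u) * μ (k + 1) :=
    sum_cpSignal_Ico hlt hkK hu huv hv
  rcases le_total a (τ k) with hak' | hka'
  · rw [← Finset.sum_Ico_consecutive _ hak' hka, left (u := a) (by omega) hak' le_rfl,
      right le_rfl hka hr, left (v := a) (by omega) (by omega) hak',
      abs_of_nonpos (sub_nonpos.2 (by exact_mod_cast hak')), Nat.cast_sub (by omega : r ≤ a)]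
    push_cast
    ring
  · rw [← Finset.sum_Ico_consecutive _ (show a - r ≤ τ k by omega) hka',
      left (u := a - r) (by omega) (by omega) le_rfl, right (u := τ k) le_rfl hka' (by omega),
      right (u := a) hka' (by omega) hr, abs_of_nonneg (sub_nonneg.2 (by exact_mod_cast hka')),
      Nat.cast_sub (by omega : r ≤ a)]
    push_cast
    ring

end Signal

section Rhat

variable {n : ℕ} {ζ : ℝ} {Y : ℕ → ℝ} {s : ℕ}

lemma rhat_le_of_lt {r : ℕ} (hr : 1 ≤ r)
    (h : thrB n (tlo s r) s (thi n s r) + ζ < |cusum Y (tlo s r) s (thi n s r)|) :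
    rhat n ζ Y s ≤ r :=
  iInf₂_le r ⟨hr, h⟩

lemma lt_abs_cusum_of_rhat_ne_top (h : rhat n ζ Y s ≠ ⊤) :
    1 ≤ (rhat n ζ Y s).toNat ∧
      thrB n (tlo s (rhat n ζ Y s).toNat) s (thi n s (rhat n ζ Y s).toNat) + ζ <
        |cusum Y (tlo s (rhat n ζ Y s).toNat) s (thi n s (rhat n ζ Y s).toNat)| := by
  set S := {r : ℕ | 1 ≤ r ∧ thrB n (tlo s r) s (thi n s r) + ζ < |cusum Y (tlo s r) s (thi n s r)|}
  have hS : S.Nonempty := by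
    by_contra! hS
    exact h (by simp [rhat, S, hS])
  have hrhat : rhat n ζ Y s = ↑(sInf S) := (ENat.natCast_sInf hS).symm
  rw [hrhat, ENat.toNat_natCast]
  exact Nat.sInf_mem hS

lemma mem_Itau_iff (h : rhat n ζ Y s ≠ ⊤) {z : ℕ} :
    z ∈ Itau n ζ Y s ↔ 2 ≤ z ∧ z ≤ n ∧ ((z : ℤ) - s).natAbs < (rhat n ζ Y s).toNat := by
  rw [Itau, if_neg h, Finset.mem_Icc, tlo, thi]
  omega

end Rhat

section Pruning

variable {rh : ℕ → ℕ∞} {I : ℕ → Finset ℕ}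

lemma pruneList_subset (l : List ℕ) : pruneList rh I l ⊆ l.toFinset := by
  induction l with
  | nil => simp [pruneList]
  | cons x rest ih =>
    rw [pruneList, List.toFinset_cons]
    split_ifs with hnil
    · simp [hnil]
    · exact ih.trans (Finset.subset_insert _ _)
    · exact Finset.insert_subset_insert _ ih

lemma pairwiseDisjoint_pruneList (l : List ℕ) :
    (pruneList rh I l : Set ℕ).PairwiseDisjoint I := by
  induction l with
  | nil => simp [pruneList]
  | cons x rest ih =>
    rw [pruneList]
    split_ifs with hnil hdrop
    · simp
    · exact ih
    · push Not at hdrop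
      rw [Finset.coe_insert]
      refine ih.insert fun b hb _ => Finset.disjoint_iff_inter_eq_empty.2 (hdrop.2 b ?_)
      simpa using pruneList_subset rest hb

lemma pruneList_eq_singleton_of_eq_top {l : List ℕ} (hsort : l.Pairwise (fun a b => rh b ≤ rh a))
    {a : ℕ} (ha : a ∈ pruneList rh I l) (htop : rh a = ⊤) : pruneList rh I l = {a} := by
  induction l with
  | nil => simp [pruneList] at ha
  | cons x rest ih =>
    rw [List.pairwise_cons] at hsort
    rw [pruneList] at ha ⊢
    split_ifs at ha ⊢ with hnil hdrop
    · rw [Finset.mem_singleton.1 ha]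
    · exact ih hsort.2 ha
    · push Not at hdrop
      rcases Finset.mem_insert.1 ha with rfl | ha
      · exact absurd htop hdrop.1
      · have hax := hsort.1 a (by simpa using pruneList_subset rest ha)
        exact absurd (top_le_iff.1 (htop ▸ hax)) hdrop.1

/-- A point `x` is dropped only because of a later `y`, with `rh y ≤ rh x` and
`I x ∩ I y ≠ ∅`. -/
lemma exists_mem_pruneList_of_propagates {Q : ℕ → Prop} (hQ : ∀ x, Q x → rh x ≠ ⊤)
    {l : List ℕ} (hsort : l.Pairwise (fun a b => rh b ≤ rh a))
    (hstep : ∀ x ∈ l, ∀ y ∈ l, Q x → rh y ≤ rh x → (I x ∩ I y).Nonempty → Q y)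
    {a : ℕ} (ha : a ∈ l) (hQa : Q a) : ∃ b ∈ pruneList rh I l, Q b := by
  induction l generalizing a with
  | nil => simp at ha
  | cons x rest ih =>
    rw [List.pairwise_cons] at hsort
    have hstep' : ∀ x ∈ rest, ∀ y ∈ rest, Q x → rh y ≤ rh x → (I x ∩ I y).Nonempty → Q y :=
      fun x hx y hy => hstep x (List.mem_cons_of_mem _ hx) y (List.mem_cons_of_mem _ hy)
    rw [pruneList]
    split_ifs with hnil hdrop
    · subst hnil
      rw [List.mem_singleton] at ha
      exact ⟨a, by simp [ha], hQa⟩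
    · rcases List.mem_cons.1 ha with rfl | ha
      · rcases hdrop with htop | ⟨y, hy, hay⟩
        · exact absurd htop (hQ a hQa)
        · exact ih hsort.2 hstep' hy
            (hstep a List.mem_cons_self y (List.mem_cons_of_mem _ hy) hQa (hsort.1 y hy) hay)
      · exact ih hsort.2 hstep' ha hQa
    · rcases List.mem_cons.1 ha with rfl | ha
      · exact ⟨a, Finset.mem_insert_self a _, hQa⟩
      · obtain ⟨b, hb, hQb⟩ := ih hsort.2 hstep' ha hQa
        exact ⟨b, Finset.mem_insert_of_mem hb, hQb⟩

end Pruning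

section Distance

variable {S : Finset ℕ} {t : ℕ}

lemma dH1_le_of_mem {b : ℕ} (hb : b ∈ S) : dH1 S t ≤ (((b : ℤ) - t).natAbs : ℝ≥0∞) :=
  iInf₂_le b hb

lemma exists_mem_dH1_eq (h : S.Nonempty) :
    ∃ a ∈ S, dH1 S t = (((a : ℤ) - t).natAbs : ℝ≥0∞) := by
  obtain ⟨a, ha, hmin⟩ := S.exists_min_image (fun s => ((s : ℤ) - t).natAbs) h
  exact ⟨a, ha, le_antisymm (dH1_le_of_mem ha) (le_iInf₂ fun s hs => by exact_mod_cast hmin s hs)⟩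

lemma nonempty_of_dH1_ne_top (h : dH1 S t ≠ ⊤) : S.Nonempty := by
  contrapose! h
  simp [dH1, h]

end Distance

/-- `ω ∈ eventB n ζ ε` unfolds to `CusumBounded n ζ (fun i => ε i ω)`. -/
def CusumBounded (n : ℕ) (ζ : ℝ) (g : ℕ → ℝ) : Prop :=
  ∀ t₁ t₂ t₃ : ℕ, 1 ≤ t₁ → t₁ < t₂ → t₂ < t₃ → t₃ ≤ n + 1 →
    |cusum g t₁ t₂ t₃| ≤ thrB n t₁ t₂ t₃ + ζ

def IsNearestCP (K : ℕ) (τ : ℕ → ℕ) (k s : ℕ) : Prop :=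
  (s < τ k → 1 < k → τ (k - 1) + τ k ≤ 2 * s) ∧ (τ k < s → k < K → 2 * s ≤ τ k + τ (k + 1))

section Detection

variable {n K : ℕ} {τ : ℕ → ℕ} {μ : ℕ → ℝ} {ζ : ℝ} {g : ℕ → ℝ}

/-- Otherwise the signal is constant on the window and the CUSUM of the data is that of the
noise. -/
lemma exists_natAbs_tau_sub_lt (hB : CusumBounded n ζ g) {s : ℕ} (hs2 : 2 ≤ s) (hsn : s ≤ n)
    (hfin : rhat n ζ (fun i => cpSignal K τ μ i + g i) s ≠ ⊤) :
    ∃ j, 1 ≤ j ∧ j ≤ K ∧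
      ((τ j : ℤ) - s).natAbs < (rhat n ζ (fun i => cpSignal K τ μ i + g i) s).toNat := by
  obtain ⟨hr1, hdet⟩ := lt_abs_cusum_of_rhat_ne_top hfin
  set r := (rhat n ζ (fun i => cpSignal K τ μ i + g i) s).toNat
  have hlo : 1 ≤ tlo s r ∧ tlo s r < s := by rw [tlo]; omega
  have hhi : s < thi n s r ∧ thi n s r ≤ n + 1 := by rw [thi]; omega
  by_contra! hfar
  have hconst : ∀ j, 1 ≤ j → j ≤ K → ¬(tlo s r < τ j ∧ τ j < thi n s r) := by
    intro j hj1 hjK hj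
    have := hfar j hj1 hjK
    rw [tlo, thi] at hj
    omega
  rw [cusum_add, cusum_eq_zero_of_forall_eq hlo.2 hhi.1 (cpSignal_eq_of_forall_not_mem hconst),
    zero_add] at hdet
  exact (hB _ _ _ hlo.1 hlo.2 hhi.1 hhi.2).not_gt hdet

lemma natAbs_tau_sub_lt_of_isNearestCP (hlt : ∀ k ≤ K, τ k < τ (k + 1)) {j k s m : ℕ}
    (hj1 : 1 ≤ j) (hjK : j ≤ K) (hkK : k ≤ K) (hnear : IsNearestCP K τ k s)
    (hj : ((τ j : ℤ) - s).natAbs < m) : ((τ k : ℤ) - s).natAbs < m := by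
  obtain ⟨hL, hR⟩ := hnear
  rcases lt_trichotomy j k with hjk | rfl | hjk
  · have h1 := tau_le_tau hlt (show j ≤ k - 1 by omega) (by omega)
    have h2 := tau_le_tau hlt (show k - 1 ≤ k by omega) (by omega)
    rcases le_or_gt (τ k) s with hc | hc
    · omega
    · have := hL hc (by omega)
      omega
  · exact hj
  · have h1 := tau_le_tau hlt (show k + 1 ≤ j by omega) (by omega)
    have h2 := hlt k hkK
    rcases le_or_gt s (τ k) with hc | hc
    · omega
    · have := hR hc (by omega)
      omega

lemma tau_mem_Itau_of_isNearestCP (h0 : τ 0 = 1) (hK1 : τ (K + 1) = n + 1)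
    (hlt : ∀ k ≤ K, τ k < τ (k + 1)) (hB : CusumBounded n ζ g) {s k : ℕ} (hs2 : 2 ≤ s)
    (hsn : s ≤ n) (hk1 : 1 ≤ k) (hkK : k ≤ K) (hnear : IsNearestCP K τ k s)
    (hfin : rhat n ζ (fun i => cpSignal K τ μ i + g i) s ≠ ⊤) :
    τ k ∈ Itau n ζ (fun i => cpSignal K τ μ i + g i) s := by
  obtain ⟨j, hj1, hjK, hj⟩ := exists_natAbs_tau_sub_lt hB hs2 hsn hfin
  rw [mem_Itau_iff hfin]
  exact ⟨(tau_mem_Icc h0 hK1 hlt hk1 hkK).1, (tau_mem_Icc h0 hK1 hlt hk1 hkK).2,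
    natAbs_tau_sub_lt_of_isNearestCP hlt hj1 hjK hkK hnear hj⟩

lemma half_add_lt_natCast_iff {a b s : ℕ} : ((a : ℝ) + b) / 2 < s ↔ a + b < 2 * s := by
  rw [div_lt_iff₀ two_pos, mul_comm]
  exact_mod_cast Iff.rfl

lemma natCast_le_half_add_iff {a b s : ℕ} : (s : ℝ) ≤ ((a : ℝ) + b) / 2 ↔ 2 * s ≤ a + b := by
  rw [le_div_iff₀ two_pos, mul_comm]
  exact_mod_cast Iff.rfl

lemma noSp_pruneList (h0 : τ 0 = 1) (hK1 : τ (K + 1) = n + 1) (hlt : ∀ k ≤ K, τ k < τ (k + 1))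
    (hK : 0 < K) (hB : CusumBounded n ζ g) {l : List ℕ} (hl : ∀ a ∈ l, 2 ≤ a ∧ a ≤ n)
    (hsort : l.Pairwise (fun a b => rhat n ζ (fun i => cpSignal K τ μ i + g i) b ≤
      rhat n ζ (fun i => cpSignal K τ μ i + g i) a)) :
    NoSp n K τ (pruneList (rhat n ζ (fun i => cpSignal K τ μ i + g i))
      (Itau n ζ (fun i => cpSignal K τ μ i + g i)) l) := by
  set S := pruneList (rhat n ζ (fun i => cpSignal K τ μ i + g i))
    (Itau n ζ (fun i => cpSignal K τ μ i + g i)) l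
  by_cases htop : ∃ a ∈ S, rhat n ζ (fun i => cpSignal K τ μ i + g i) a = ⊤
  · obtain ⟨a, ha, hat⟩ := htop
    have hS : S = {a} := pruneList_eq_singleton_of_eq_top hsort ha hat
    refine ⟨fun _ _ _ => ?_, ?_, ?_⟩ <;> exact hS ▸ (Finset.card_filter_le _ _).trans (by simp)
  push Not at htop
  have hcell (k : ℕ) (hk1 : 1 ≤ k) (hkK : k ≤ K) (p : ℕ → Prop) [DecidablePred p]
      (hp : ∀ s, p s → IsNearestCP K τ k s) : (S.filter p).card ≤ 1 := by
    refine Finset.card_le_one.2 fun s hs s' hs' => ?_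
    rw [Finset.mem_filter] at hs hs'
    have hmem {x : ℕ} (hx : x ∈ S) (hpx : p x) :
        τ k ∈ Itau n ζ (fun i => cpSignal K τ μ i + g i) x := by
      have hxl := hl x (by simpa using pruneList_subset l hx)
      exact tau_mem_Itau_of_isNearestCP h0 hK1 hlt hB hxl.1 hxl.2 hk1 hkK (hp x hpx) (htop x hx)
    by_contra hne
    exact Finset.disjoint_left.1 (pairwiseDisjoint_pruneList l hs.1 hs'.1 hne)
      (hmem hs.1 hs.2) (hmem hs'.1 hs'.2)
  refine ⟨fun k hk2 hkK => hcell k (by omega) (by omega) _ ?_, hcell 1 le_rfl hK _ ?_,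
    hcell K hK le_rfl _ ?_⟩ <;>
  · rintro s ⟨h1, h2⟩
    simp only [half_add_lt_natCast_iff, natCast_le_half_add_iff] at h1 h2
    constructor <;> intros <;> omega

end Detection

section Energy

lemma sq_mul_lt_of_mul_sqrt_lt {κ x y : ℝ} (hκ : 0 ≤ κ) (h : κ * √x < √y) : κ ^ 2 * x < y := by
  rcases le_or_gt x 0 with hx | hx
  · rw [Real.sqrt_eq_zero'.2 hx, mul_zero, Real.sqrt_pos] at h
    nlinarith [sq_nonneg κ]
  · rw [← Real.sqrt_sq hκ, ← Real.sqrt_mul (sq_nonneg κ)] at h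
    exact (Real.sqrt_lt_sqrt_iff (by positivity)).1 h

lemma log_6400_le : log 6400 ≤ 9 := by
  rw [Real.log_le_iff_le_exp (by norm_num), show (9 : ℝ) = (9 : ℕ) * 1 by norm_num,
    Real.exp_nat_mul]
  calc (6400 : ℝ) ≤ 2.7182818283 ^ 9 := by norm_num
    _ ≤ exp 1 ^ 9 := by gcongr; exact Real.exp_one_gt_d9.le

lemma one_le_log_of_four_le {x : ℝ} (hx : 4 ≤ x) : 1 ≤ log x := by
  rw [Real.le_log_iff_exp_le (by linarith)]
  linarith [Real.exp_one_lt_d9]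

/-- `H` stands for `(τ*_k - τ*_{k-1})(τ*_{k+1} - τ*_k)/(τ*_{k+1} - τ*_{k-1})`, so that
`E_k(θ)² = Δ² H` and `ψ² = 2 log (n / H) + z²`. -/
lemma log_bounds_of_energy {n H Δ z : ℝ} (hH : 0 < H) (hnH : 4 * H ≤ n)
    (hE : 1000 ^ 2 * (2 * log (n / H) + z ^ 2) < Δ ^ 2 * H) :
    1 ≤ log (n * Δ ^ 2) ∧ 1600 * (log (n * Δ ^ 2) + z ^ 2) ≤ Δ ^ 2 * H := by
  have hρ : 1 ≤ log (n / H) := one_le_log_of_four_le (by rw [le_div_iff₀ hH]; linarith)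
  have hΔH : 2000000 < Δ ^ 2 * H := by nlinarith [sq_nonneg z]
  have hsplit : log (n * Δ ^ 2) = log (n / H) + log (Δ ^ 2 * H) := by
    rw [← Real.log_mul (div_pos (by linarith) hH).ne' (by linarith)]
    congr 1
    field_simp
  -- `log x = log (x / 6400) + log 6400 ≤ x / 6400 + 9`
  have hlog : log (Δ ^ 2 * H) ≤ Δ ^ 2 * H / 6400 + 9 := by
    have := Real.log_le_sub_one_of_pos (show 0 < Δ ^ 2 * H / 6400 by positivity)
    rw [Real.log_div (by positivity) (by norm_num)] at this
    linarith [log_6400_le]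
  have hlog1 : 1 ≤ log (Δ ^ 2 * H) := one_le_log_of_four_le (by linarith)
  rw [hsplit]
  constructor <;> nlinarith [sq_nonneg z]

lemma two_mul_threshold_lt {n : ℕ} {Δ z D r : ℝ} (hD : 2 * D ≤ r) (hlog : 1 ≤ log (n * Δ ^ 2))
    (hr : 200 * (log (n * Δ ^ 2) + z ^ 2) < Δ ^ 2 * r) :
    2 * (√(2 * log (2 * n / r)) + z) < |(r - D) * Δ / r * √(r / 2)| := by
  have hnΔ : 0 < (n : ℝ) * Δ ^ 2 := lt_of_le_of_ne (by positivity) fun h => by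
    rw [← h, Real.log_zero] at hlog
    linarith
  have hn : (0 : ℝ) < n := pos_of_mul_pos_left hnΔ (sq_nonneg Δ)
  have hΔr : 200 ≤ Δ ^ 2 * r := by nlinarith [sq_nonneg z]
  have hr0 : 0 < r := pos_of_mul_pos_right (by linarith) (sq_nonneg Δ)
  set ℓ := log (n * Δ ^ 2)
  have hthr : √(2 * log (2 * n / r)) ≤ √(2 * ℓ) := by
    refine Real.sqrt_le_sqrt (mul_le_mul_of_nonneg_left (Real.log_le_log (by positivity) ?_)
      zero_le_two)
    rw [div_le_iff₀ hr0]
    nlinarith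
  have hlhs : 2 * (√(2 * ℓ) + |z|) < √(Δ ^ 2 * r / 8) := by
    rw [Real.lt_sqrt (by positivity)]
    have := Real.sq_sqrt (show 0 ≤ 2 * ℓ by linarith)
    nlinarith [sq_nonneg (√(2 * ℓ) - |z|), sq_abs z]
  have hrhs : √(Δ ^ 2 * r / 8) ≤ |(r - D) * Δ / r * √(r / 2)| := by
    rw [show Δ ^ 2 * r / 8 = (|Δ| / 2) ^ 2 * (r / 2) by rw [div_pow, sq_abs]; ring,
      Real.sqrt_mul (by positivity), Real.sqrt_sq (by positivity), abs_mul,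
      abs_of_nonneg (Real.sqrt_nonneg _), abs_div, abs_mul, abs_of_pos hr0,
      abs_of_pos (by linarith : 0 < r - D)]
    refine mul_le_mul_of_nonneg_right ?_ (Real.sqrt_nonneg _)
    rw [le_div_iff₀ hr0]
    nlinarith [abs_nonneg Δ]
  linarith [le_abs_self z]

end Energy

section Localization

variable {n K : ℕ} {τ : ℕ → ℕ} {μ : ℕ → ℝ} {ζ : ℝ} {g : ℕ → ℝ}

lemma cusum_cpSignal_at_cp (hlt : ∀ k ≤ K, τ k < τ (k + 1)) {k : ℕ} (hk1 : 1 ≤ k)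
    (hkK : k ≤ K) :
    cusum (cpSignal K τ μ) (τ (k - 1)) (τ k) (τ (k + 1)) = (μ (k + 1) - μ k) *
      √((((τ k : ℝ) - τ (k - 1)) * ((τ (k + 1) : ℝ) - τ k)) / ((τ (k + 1) : ℝ) - τ (k - 1))) := by
  have hk : k - 1 + 1 = k := by omega
  have hleft := hlt (k - 1) (by omega)
  rw [hk] at hleft
  rw [cusum, segMean_eq_of_forall_eq (c := μ (k + 1)) (hlt k hkK) fun i hi =>
      cpSignal_eq hlt hkK (Finset.mem_Ico.1 hi).1 (Finset.mem_Ico.1 hi).2,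
    segMean_eq_of_forall_eq (c := μ k) hleft fun i hi => hk ▸
      cpSignal_eq hlt (by omega) (Finset.mem_Ico.1 hi).1 (hk ▸ (Finset.mem_Ico.1 hi).2)]

lemma log_bounds_of_high_energy (h0 : τ 0 = 1) (hK1 : τ (K + 1) = n + 1)
    (hlt : ∀ k ≤ K, τ k < τ (k + 1)) {k : ℕ} (hk1 : 1 ≤ k) (hkK : k ≤ K)
    (hE : 1000 * √(psiSq n (ζ ^ 2) (τ (k - 1)) (τ k) (τ (k + 1))) <
      |cusum (cpSignal K τ μ) (τ (k - 1)) (τ k) (τ (k + 1))|) :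
    1 ≤ log (n * (μ (k + 1) - μ k) ^ 2) ∧
      1600 * (log (n * (μ (k + 1) - μ k) ^ 2) + ζ ^ 2) ≤
        (μ (k + 1) - μ k) ^ 2 * ((τ k : ℝ) - τ (k - 1)) ∧
      1600 * (log (n * (μ (k + 1) - μ k) ^ 2) + ζ ^ 2) ≤
        (μ (k + 1) - μ k) ^ 2 * ((τ (k + 1) : ℝ) - τ k) := by
  have hA : (τ (k - 1) : ℝ) + 1 ≤ τ k := by
    have := hlt (k - 1) (by omega)
    rw [show k - 1 + 1 = k by omega] at this
    exact_mod_cast this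
  have hB : (τ k : ℝ) + 1 ≤ τ (k + 1) := by exact_mod_cast hlt k hkK
  have hn : (τ (k + 1) : ℝ) - τ (k - 1) ≤ n := by
    have h1 : 1 ≤ τ (k - 1) := h0 ▸ tau_le_tau hlt (Nat.zero_le _) (by omega)
    have h3 : τ (k + 1) ≤ n + 1 := hK1 ▸ tau_le_tau hlt (by omega) le_rfl
    have h1' : (1 : ℝ) ≤ τ (k - 1) := by exact_mod_cast h1
    have h3' : (τ (k + 1) : ℝ) ≤ n + 1 := by exact_mod_cast h3
    linarith
  rw [cusum_cpSignal_at_cp hlt hk1 hkK, abs_mul, abs_of_nonneg (Real.sqrt_nonneg _),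
    ← Real.sqrt_sq_eq_abs, ← Real.sqrt_mul (sq_nonneg _), psiSq] at hE
  set A := (τ k : ℝ) - τ (k - 1)
  set B := (τ (k + 1) : ℝ) - τ k
  have hA0 : 0 < A := by linarith
  have hB0 : 0 < B := by linarith
  have hAB : (τ (k + 1) : ℝ) - τ (k - 1) = A + B := by ring
  rw [hAB] at hE hn
  set H := A * B / (A + B) with hH
  have hH0 : 0 < H := div_pos (mul_pos hA0 hB0) (add_pos hA0 hB0)
  have hHA : H ≤ A := by rw [div_le_iff₀ (add_pos hA0 hB0)]; nlinarith
  have hHB : H ≤ B := by rw [div_le_iff₀ (add_pos hA0 hB0)]; nlinarith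
  have h4H : 4 * H ≤ n := by
    rw [hH, mul_div_assoc', div_le_iff₀ (add_pos hA0 hB0)]
    nlinarith [sq_nonneg (A - B)]
  rw [show (n : ℝ) * (A + B) / (B * A) = n / H by rw [hH, div_div_eq_mul_div, mul_comm B A]] at hE
  obtain ⟨hlog, hbound⟩ := log_bounds_of_energy hH0 h4H (sq_mul_lt_of_mul_sqrt_lt (by norm_num) hE)
  exact ⟨hlog, hbound.trans (by gcongr), hbound.trans (by gcongr)⟩

lemma rhat_le_of_window (h0 : τ 0 = 1) (hK1 : τ (K + 1) = n + 1)
    (hlt : ∀ k ≤ K, τ k < τ (k + 1)) (hB : CusumBounded n ζ g) {k a r : ℕ} (hk1 : 1 ≤ k)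
    (hkK : k ≤ K) (hl : τ (k - 1) + r ≤ a) (hr : a + r ≤ τ (k + 1))
    (hrk : 2 * ((a : ℤ) - τ k).natAbs + 1 ≤ r) (hlog : 1 ≤ log (n * (μ (k + 1) - μ k) ^ 2))
    (hL : 200 * (log (n * (μ (k + 1) - μ k) ^ 2) + ζ ^ 2) < (μ (k + 1) - μ k) ^ 2 * r) :
    rhat n ζ (fun i => cpSignal K τ μ i + g i) a ≤ r := by
  have h1 : 1 ≤ τ (k - 1) := h0 ▸ tau_le_tau hlt (Nat.zero_le _) (by omega)
  have h3 : τ (k + 1) ≤ n + 1 := hK1 ▸ tau_le_tau hlt (by omega) le_rfl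
  have hD : 2 * |(a : ℝ) - τ k| ≤ r := by
    have : |(a : ℝ) - τ k| = (((a : ℤ) - τ k).natAbs : ℝ) := by
      rw [Nat.cast_natAbs]
      push_cast
      rfl
    rw [this]
    exact_mod_cast (by omega : 2 * ((a : ℤ) - τ k).natAbs ≤ r)
  have hsignal : 2 * (thrB n (a - r) a (a + r) + ζ) <
      |cusum (cpSignal K τ μ) (a - r) a (a + r)| := by
    rw [thrB_symm (by omega) (by omega), cusum_symm (by omega) (by omega),
      sum_sub_sum_cpSignal_symm hlt hk1 hkK hl hr (by omega) (by omega)]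
    exact two_mul_threshold_lt hD hlog hL
  have hnoise := hB (a - r) a (a + r) (by omega) (by omega) (by omega) (by omega)
  have htri := abs_sub (cusum (cpSignal K τ μ) (a - r) a (a + r) + cusum g (a - r) a (a + r))
    (cusum g (a - r) a (a + r))
  rw [add_sub_cancel_right] at htri
  refine rhat_le_of_lt (by omega) ?_
  rw [show tlo a r = a - r by rw [tlo]; omega, show thi n a r = a + r by rw [thi]; omega,
    cusum_add]
  linarith

lemma exists_rhat_le_of_high_energy (h0 : τ 0 = 1) (hK1 : τ (K + 1) = n + 1)
    (hlt : ∀ k ≤ K, τ k < τ (k + 1)) (hB : CusumBounded n ζ g) {k a d : ℕ} (hk1 : 1 ≤ k)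
    (hkK : k ≤ K) (had : ((a : ℤ) - τ k).natAbs = d) (hdl : 8 * d + τ (k - 1) < τ k)
    (hdr : 8 * d + τ k < τ (k + 1))
    (hE : 1000 * √(psiSq n (ζ ^ 2) (τ (k - 1)) (τ k) (τ (k + 1))) <
      |cusum (cpSignal K τ μ) (τ (k - 1)) (τ k) (τ (k + 1))|) :
    ∃ r : ℕ, rhat n ζ (fun i => cpSignal K τ μ i + g i) a ≤ r ∧
      4 * (r - 1) + τ (k - 1) < τ k ∧ 4 * (r - 1) + τ k < τ (k + 1) ∧
      (r - 1 ≤ 2 * d ∨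
        (r : ℝ) - 1 ≤ 200 * (log (n * (μ (k + 1) - μ k) ^ 2) + ζ ^ 2) / (μ (k + 1) - μ k) ^ 2) := by
  obtain ⟨hlog, hA, hB'⟩ := log_bounds_of_high_energy h0 hK1 hlt hk1 hkK hE
  set Δ := μ (k + 1) - μ k
  set L := log (n * Δ ^ 2) + ζ ^ 2
  have hΔ : 0 < Δ ^ 2 := lt_of_le_of_ne (sq_nonneg _) fun h => by
    rw [← h, mul_zero, Real.log_zero] at hlog
    linarith
  have hL : 0 ≤ 200 * L / Δ ^ 2 := div_nonneg (by nlinarith [sq_nonneg ζ]) hΔ.le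
  set f := ⌊200 * L / Δ ^ 2⌋₊
  have hf : (f : ℝ) ≤ 200 * L / Δ ^ 2 := Nat.floor_le hL
  have hf' : 200 * L / Δ ^ 2 < f + 1 := Nat.lt_floor_add_one _
  have h8f {u v : ℕ} (huv : 1600 * L ≤ Δ ^ 2 * ((v : ℝ) - u)) : 8 * f + u ≤ v := by
    have hfΔ := (le_div_iff₀ hΔ).1 hf
    have : 8 * (f : ℝ) ≤ (v : ℝ) - u := le_of_mul_le_mul_right (by linarith) hΔ
    exact_mod_cast (by linarith : (8 * f + u : ℝ) ≤ v)
  have hfl := h8f hA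
  have hfr := h8f hB'
  refine ⟨max (2 * d + 1) (f + 1), rhat_le_of_window h0 hK1 hlt hB hk1 hkK (by omega) (by omega)
    (by omega) hlog ?_, by omega, by omega, ?_⟩
  · have : (f : ℝ) + 1 ≤ (max (2 * d + 1) (f + 1) : ℕ) := by exact_mod_cast le_max_right _ _
    rw [div_lt_iff₀ hΔ] at hf'
    nlinarith
  · rcases le_total (2 * d + 1) (f + 1) with h | h
    · right
      rw [max_eq_right h]
      push_cast
      linarith
    · left
      omega

lemma tau_mem_Itau_of_inter (hlt : ∀ k ≤ K, τ k < τ (k + 1)) (hB : CusumBounded n ζ g)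
    {k r x y : ℕ} (hkK : k ≤ K) (hrl : 4 * (r - 1) + τ (k - 1) < τ k)
    (hrr : 4 * (r - 1) + τ k < τ (k + 1))
    (hy2 : 2 ≤ y) (hyn : y ≤ n) (hxr : rhat n ζ (fun i => cpSignal K τ μ i + g i) x ≤ r)
    (hyx : rhat n ζ (fun i => cpSignal K τ μ i + g i) y ≤
      rhat n ζ (fun i => cpSignal K τ μ i + g i) x)
    (hkx : τ k ∈ Itau n ζ (fun i => cpSignal K τ μ i + g i) x)
    (hxy : (Itau n ζ (fun i => cpSignal K τ μ i + g i) x ∩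
      Itau n ζ (fun i => cpSignal K τ μ i + g i) y).Nonempty) :
    τ k ∈ Itau n ζ (fun i => cpSignal K τ μ i + g i) y := by
  have hxtop := ne_top_of_le_ne_top (ENat.natCast_ne_top r) hxr
  have hytop := ne_top_of_le_ne_top hxtop hyx
  have hrx := ENat.toNat_le_of_le_natCast hxr
  have hryx := ENat.toNat_le_toNat hyx hxtop
  obtain ⟨z, hz⟩ := hxy
  rw [Finset.mem_inter, mem_Itau_iff hxtop, mem_Itau_iff hytop] at hz
  rw [mem_Itau_iff hxtop] at hkx
  obtain ⟨j, hj1, hjK, hjy⟩ := exists_natAbs_tau_sub_lt hB hy2 hyn hytop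
  obtain rfl : j = k := eq_of_natAbs_tau_sub_le hlt hjK hkK (m := 4 * (r - 1)) (by omega) hrl hrr
  rw [mem_Itau_iff hytop]
  omega

lemma eight_mul_add_lt_of_lt_ofReal {d a b c : ℕ}
    (h : (d : ℝ≥0∞) < ENNReal.ofReal (min ((b : ℝ) - a) ((c : ℝ) - b) / 8)) :
    8 * d + a < b ∧ 8 * d + b < c := by
  rw [← ENNReal.ofReal_natCast, ENNReal.ofReal_lt_ofReal_iff'] at h
  have hab := min_le_left ((b : ℝ) - a) ((c : ℝ) - b)
  have hbc := min_le_right ((b : ℝ) - a) ((c : ℝ) - b)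
  constructor
  · exact_mod_cast (by linarith : (8 * d + a : ℝ) < b)
  · exact_mod_cast (by linarith : (8 * d + b : ℝ) < c)

lemma dH1_pruneList_le (h0 : τ 0 = 1) (hK1 : τ (K + 1) = n + 1)
    (hlt : ∀ k ≤ K, τ k < τ (k + 1)) (hB : CusumBounded n ζ g) {l : List ℕ}
    (hl : ∀ a ∈ l, 2 ≤ a ∧ a ≤ n)
    (hsort : l.Pairwise (fun a b => rhat n ζ (fun i => cpSignal K τ μ i + g i) b ≤
      rhat n ζ (fun i => cpSignal K τ μ i + g i) a))
    {k : ℕ} (hk1 : 1 ≤ k) (hkK : k ≤ K)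
    (hE : 1000 * √(psiSq n (ζ ^ 2) (τ (k - 1)) (τ k) (τ (k + 1))) <
      |cusum (cpSignal K τ μ) (τ (k - 1)) (τ k) (τ (k + 1))|)
    (hloc : dH1 l.toFinset (τ k) <
      ENNReal.ofReal (min ((τ k : ℝ) - (τ (k - 1) : ℝ)) ((τ (k + 1) : ℝ) - (τ k : ℝ)) / 8)) :
    dH1 (pruneList (rhat n ζ (fun i => cpSignal K τ μ i + g i))
        (Itau n ζ (fun i => cpSignal K τ μ i + g i)) l) (τ k) ≤
      max (2 * dH1 l.toFinset (τ k))
        (ENNReal.ofReal (200 * (log (n * (μ (k + 1) - μ k) ^ 2) + ζ ^ 2) /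
          (μ (k + 1) - μ k) ^ 2)) := by
  obtain ⟨a, hal, hda⟩ := exists_mem_dH1_eq (nonempty_of_dH1_ne_top hloc.ne_top)
  rw [List.mem_toFinset] at hal
  rw [hda] at hloc ⊢
  set d := ((a : ℤ) - τ k).natAbs with hd
  obtain ⟨hdl, hdr⟩ := eight_mul_add_lt_of_lt_ofReal hloc
  obtain ⟨r, hra, hrl, hrr, hr⟩ :=
    exists_rhat_le_of_high_energy h0 hK1 hlt hB hk1 hkK hd.symm hdl hdr hE
  set Q := fun x => τ k ∈ Itau n ζ (fun i => cpSignal K τ μ i + g i) x ∧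
    rhat n ζ (fun i => cpSignal K τ μ i + g i) x ≤ r
  have hQ (x : ℕ) (hx : Q x) : rhat n ζ (fun i => cpSignal K τ μ i + g i) x ≠ ⊤ :=
    ne_top_of_le_ne_top (ENat.natCast_ne_top r) hx.2
  have hQa : Q a := ⟨tau_mem_Itau_of_isNearestCP h0 hK1 hlt hB (hl a hal).1 (hl a hal).2 hk1 hkK
    ⟨fun _ _ => by omega, fun _ _ => by omega⟩ (ne_top_of_le_ne_top (ENat.natCast_ne_top r) hra),
    hra⟩
  obtain ⟨b, hb, hbk, hbr⟩ := exists_mem_pruneList_of_propagates hQ hsort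
    (fun x _ y hy hQx hyx hxy => ⟨tau_mem_Itau_of_inter hlt hB hkK hrl hrr
      (hl y hy).1 (hl y hy).2 hQx.2 hyx hQx.1 hxy, hyx.trans hQx.2⟩) hal hQa
  have hdist : ((b : ℤ) - τ k).natAbs + 1 ≤ r := by
    have := ((mem_Itau_iff (hQ b ⟨hbk, hbr⟩)).1 hbk).2.2
    have := ENat.toNat_le_of_le_natCast hbr
    omega
  refine (dH1_le_of_mem hb).trans ?_
  rcases hr with hr | hr
  · exact le_max_of_le_left (by exact_mod_cast (by omega : ((b : ℤ) - τ k).natAbs ≤ 2 * d))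
  · refine le_max_of_le_right ?_
    rw [← ENNReal.ofReal_natCast]
    refine ENNReal.ofReal_le_ofReal (le_trans ?_ hr)
    have : (((b : ℤ) - τ k).natAbs : ℝ) + 1 ≤ r := by exact_mod_cast hdist
    linarith

end Localization

lemma ofReal_one_sub_le_of_compl_le {Ω : Type*} [MeasurableSpace Ω] {P : Measure Ω}
    [IsProbabilityMeasure P] {s : Set Ω} {α : ℝ} (hα : 0 ≤ α) (h : P sᶜ ≤ ENNReal.ofReal α) :
    ENNReal.ofReal (1 - α) ≤ P s := by
  rw [ENNReal.ofReal_sub _ hα, ENNReal.ofReal_one, tsub_le_iff_right]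
  calc 1 = P Set.univ := measure_univ.symm
    _ ≤ P s + P sᶜ := measure_univ_le_add_compl s
    _ ≤ P s + ENNReal.ofReal α := by gcongr

/-- Proposition 12 of the paper: the pruning step keeps no spurious
change-point and does not deteriorate the localization of reasonably well-localized
high-energy change-points. -/
theorem pruning_step :
    ∃ κ > (0 : ℝ), ∃ c > (0 : ℝ),
    ∀ α : ℝ, 0 < α → α < 1 →
    ∀ n : ℕ,
    ∀ (Ω : Type) (_ : MeasurableSpace Ω) (P : Measure Ω), IsProbabilityMeasure P →
    ∀ ε : ℕ → Ω → ℝ, IsStdSubGaussian P ε →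
    ∀ ζ : ℝ, P ((eventB n ζ ε)ᶜ) ≤ ENNReal.ofReal α →
      ENNReal.ofReal (1 - α) ≤ P (eventB n ζ ε) ∧
      ∀ K : ℕ, 0 < K → ∀ τs : ℕ → ℕ, ∀ μ : ℕ → ℝ, IsCPData n K τs μ →
      ∀ ω ∈ eventB n ζ ε,
      ∀ l : List ℕ, l.Nodup → (∀ a ∈ l, 2 ≤ a ∧ a ≤ n) →
        l.Pairwise (fun a b =>
          rhat n ζ (fun i => cpSignal K τs μ i + ε i ω) b ≤
            rhat n ζ (fun i => cpSignal K τs μ i + ε i ω) a) →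
        -- (a) (NoSp) for the pruned vector
        NoSp n K τs
          (pruneList (rhat n ζ (fun i => cpSignal K τs μ i + ε i ω))
            (Itau n ζ (fun i => cpSignal K τs μ i + ε i ω)) l) ∧
        -- (b) detection of reasonably well-localized high-energy change-points
        (∀ k, 1 ≤ k → k ≤ K →
          κ * Real.sqrt (psiSq n (ζ ^ 2) (τs (k - 1)) (τs k) (τs (k + 1))) <
            |cusum (cpSignal K τs μ) (τs (k - 1)) (τs k) (τs (k + 1))| →
          dH1 l.toFinset (τs k) <
            ENNReal.ofReal
              (min ((τs k : ℝ) - (τs (k - 1) : ℝ)) ((τs (k + 1) : ℝ) - (τs k : ℝ)) / 8) →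
          dH1 (pruneList (rhat n ζ (fun i => cpSignal K τs μ i + ε i ω))
              (Itau n ζ (fun i => cpSignal K τs μ i + ε i ω)) l) (τs k) ≤
            max (2 * dH1 l.toFinset (τs k))
              (ENNReal.ofReal (c * (Real.log ((n : ℝ) * (μ (k + 1) - μ k) ^ 2) + ζ ^ 2) /
                (μ (k + 1) - μ k) ^ 2))) := by
  refine ⟨1000, by norm_num, 200, by norm_num, fun α hα0 _ n Ω _ P _ ε _ ζ hζ => ⟨?_, ?_⟩⟩
  · exact ofReal_one_sub_le_of_compl_le hα0.le hζ
  · rintro K hK τ μ ⟨h0, hK1, hlt, -⟩ ω hω l - hl hsort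
    exact ⟨noSp_pruneList h0 hK1 hlt hK hω hl hsort,
      fun k hk1 hkK hE hloc => dH1_pruneList_le h0 hK1 hlt hω hl hsort hk1 hkK hE hloc⟩
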